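/- arXiv:0812.5030 — 4 statements merged into one kernel-verified Lean document; each statement's English description precedes it below -/
import Mathlib

section
/- Let A, B, C, D be points in Euclidean 3-space ℝ³ with A ≠ B, and suppose neither C nor D lies on the line through A and B. Let θ be the dihedral angle of the tetrahedron ABCD along the edge AB, i.e., the angle between the vectors C − C′ and D − D′, where C′ and D′ are the orthogonal projections of C and of D onto the line through A and B. Then sin θ = (3/2) · [ABCD] · dist(A,B) / ([ABC] · [ABD]). -/
/-!
Write `b = B - A` and let `c`, `d` be the components of `C - A`, `D - A` orthogonal to `b`.
Shifting `C - A` and `D - A` along `b` changes neither `b × (C - A)` nor the triple product, so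
`[ABC] = ‖b‖‖c‖/2`, `[ABD] = ‖b‖‖d‖/2` and `6[ABCD] = |⟪b × c, d⟫|`. For `b` orthogonal to `c` and
`d`, the Gram determinant of `b, c, d` gives `|⟪b × c, d⟫| = ‖b‖‖c‖‖d‖ sin ∠(c, d)`.
-/

open RealInnerProductSpace

/-- The cross product on `EuclideanSpace ℝ (Fin 3)`. -/
noncomputable def cross3 (u v : EuclideanSpace ℝ (Fin 3)) : EuclideanSpace ℝ (Fin 3) :=
  WithLp.toLp 2 ![u 1 * v 2 - u 2 * v 1, u 2 * v 0 - u 0 * v 2, u 0 * v 1 - u 1 * v 0]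

/-- The unsigned area of the triangle `ABC` in `ℝ³`. -/
noncomputable def triArea (A B C : EuclideanSpace ℝ (Fin 3)) : ℝ :=
  (1 / 2) * ‖cross3 (B - A) (C - A)‖

/-- The unsigned volume of the tetrahedron `ABCD` in `ℝ³`. -/
noncomputable def tetVol (A B C D : EuclideanSpace ℝ (Fin 3)) : ℝ :=
  (1 / 6) * |⟪cross3 (B - A) (C - A), D - A⟫|

open InnerProductGeometry

section OrthogonalComponent

variable {E : Type*} [NormedAddCommGroup E] [InnerProductSpace ℝ E]
  (K : Submodule ℝ E) [K.HasOrthogonalProjection]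

theorem Submodule.sub_starProjection_ne_zero {x : E} (hx : x ∉ K) : x - K.starProjection x ≠ 0 :=
  fun h => hx ((K.starProjection_eq_self_iff).mp (sub_eq_zero.mp h).symm)

theorem Submodule.sub_sub_starProjection_mem (x : E) : x - (x - K.starProjection x) ∈ K := by
  rw [sub_sub_cancel]
  exact K.starProjection_apply_mem x

theorem inner_sub_starProjection_span_singleton (b x : E) :
    ⟪b, x - (ℝ ∙ b).starProjection x⟫ = 0 :=
  Submodule.mem_orthogonal_singleton_iff_inner_right.mp
    ((ℝ ∙ b).sub_starProjection_mem_orthogonal x)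

end OrthogonalComponent

section Cross3

variable (u v w : EuclideanSpace ℝ (Fin 3))

theorem inner_eq_sum_fin_three : ⟪u, v⟫ = u 0 * v 0 + u 1 * v 1 + u 2 * v 2 := by
  simp only [PiLp.inner_apply, RCLike.inner_apply, Real.ringHom_apply, Fin.sum_univ_three]
  ring

theorem inner_cross3_self_left : ⟪cross3 u v, u⟫ = 0 := by
  simp only [inner_eq_sum_fin_three, cross3,
    Matrix.cons_val_zero, Matrix.cons_val_one, Matrix.cons_val]
  ring

theorem cross3_smul_self_right (t : ℝ) : cross3 u (t • u) = 0 := by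
  ext i
  fin_cases i <;> simp [cross3] <;> ring

theorem cross3_sub_right : cross3 u (v - w) = cross3 u v - cross3 u w := by
  ext i
  fin_cases i <;> simp [cross3] <;> ring

theorem cross3_eq_of_sub_mem_span {v w : EuclideanSpace ℝ (Fin 3)} (h : v - w ∈ ℝ ∙ u) :
    cross3 u v = cross3 u w := by
  obtain ⟨t, ht⟩ := Submodule.mem_span_singleton.mp h
  rw [← sub_eq_zero, ← cross3_sub_right, ← ht, cross3_smul_self_right]

theorem inner_cross3_eq_of_sub_mem_span {w w' : EuclideanSpace ℝ (Fin 3)} (h : w - w' ∈ ℝ ∙ u) :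
    ⟪cross3 u v, w⟫ = ⟪cross3 u v, w'⟫ := by
  obtain ⟨t, ht⟩ := Submodule.mem_span_singleton.mp h
  rw [← sub_eq_zero, ← inner_sub_right, ← ht, real_inner_smul_right, inner_cross3_self_left,
    mul_zero]

/-- Lagrange's identity. -/
theorem norm_cross3_sq : ‖cross3 u v‖ ^ 2 = ‖u‖ ^ 2 * ‖v‖ ^ 2 - ⟪u, v⟫ ^ 2 := by
  simp only [← real_inner_self_eq_norm_sq, inner_eq_sum_fin_three, cross3,
    Matrix.cons_val_zero, Matrix.cons_val_one, Matrix.cons_val]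
  ring

theorem inner_cross3_sq :
    ⟪cross3 u v, w⟫ ^ 2 =
      ⟪u, u⟫ * ⟪v, v⟫ * ⟪w, w⟫ + 2 * ⟪u, v⟫ * ⟪v, w⟫ * ⟪u, w⟫
        - ⟪u, u⟫ * ⟪v, w⟫ ^ 2 - ⟪v, v⟫ * ⟪u, w⟫ ^ 2 - ⟪w, w⟫ * ⟪u, v⟫ ^ 2 := by
  simp only [inner_eq_sum_fin_three, cross3,
    Matrix.cons_val_zero, Matrix.cons_val_one, Matrix.cons_val]
  ring

theorem norm_cross3_of_inner_eq_zero {u v : EuclideanSpace ℝ (Fin 3)} (h : ⟪u, v⟫ = 0) :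
    ‖cross3 u v‖ = ‖u‖ * ‖v‖ := by
  rw [← sq_eq_sq₀ (norm_nonneg _) (by positivity), norm_cross3_sq, h, mul_pow]
  ring

theorem abs_inner_cross3_of_inner_eq_zero {u v w : EuclideanSpace ℝ (Fin 3)} (hv : ⟪u, v⟫ = 0)
    (hw : ⟪u, w⟫ = 0) :
    |⟪cross3 u v, w⟫| = ‖u‖ * ‖v‖ * ‖w‖ * Real.sin (angle v w) := by
  have hsin := sin_angle_nonneg v w
  rw [← sq_eq_sq₀ (abs_nonneg _) (by positivity), sq_abs, inner_cross3_sq, hv, hw,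
    ← cos_angle_mul_norm_mul_norm v w]
  simp only [real_inner_self_eq_norm_sq]
  have := Real.sin_sq_add_cos_sq (angle v w)
  linear_combination -(‖u‖ * ‖v‖ * ‖w‖) ^ 2 * this

end Cross3

theorem stmt0 (A B C D : EuclideanSpace ℝ (Fin 3))
    (hAB : A ≠ B)
    (hC : C - A ∉ Submodule.span ℝ ({B - A} : Set (EuclideanSpace ℝ (Fin 3))))
    (hD : D - A ∉ Submodule.span ℝ ({B - A} : Set (EuclideanSpace ℝ (Fin 3))))
    (θ : ℝ)
    (hθ : θ = InnerProductGeometry.angle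
      ((C - A) - (Submodule.orthogonalProjectionOnto
        (Submodule.span ℝ ({B - A} : Set (EuclideanSpace ℝ (Fin 3)))) (C - A) :
          EuclideanSpace ℝ (Fin 3)))
      ((D - A) - (Submodule.orthogonalProjectionOnto
        (Submodule.span ℝ ({B - A} : Set (EuclideanSpace ℝ (Fin 3)))) (D - A) :
          EuclideanSpace ℝ (Fin 3)))) :
    Real.sin θ = (3 / 2) * tetVol A B C D * dist A B / (triArea A B C * triArea A B D) := by
  set K := ℝ ∙ (B - A)
  simp only [← Submodule.starProjection_apply] at hθ
  set c := C - A - K.starProjection (C - A)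
  set d := D - A - K.starProjection (D - A)
  have hb : ‖B - A‖ ≠ 0 := norm_ne_zero_iff.mpr (sub_ne_zero.mpr hAB.symm)
  have hc : ‖c‖ ≠ 0 := norm_ne_zero_iff.mpr (K.sub_starProjection_ne_zero hC)
  have hd : ‖d‖ ≠ 0 := norm_ne_zero_iff.mpr (K.sub_starProjection_ne_zero hD)
  have area_C : triArea A B C = 1 / 2 * (‖B - A‖ * ‖c‖) := by
    rw [triArea, cross3_eq_of_sub_mem_span _ (K.sub_sub_starProjection_mem _),
      norm_cross3_of_inner_eq_zero (inner_sub_starProjection_span_singleton _ _)]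
  have area_D : triArea A B D = 1 / 2 * (‖B - A‖ * ‖d‖) := by
    rw [triArea, cross3_eq_of_sub_mem_span _ (K.sub_sub_starProjection_mem _),
      norm_cross3_of_inner_eq_zero (inner_sub_starProjection_span_singleton _ _)]
  have volume : tetVol A B C D = 1 / 6 * (‖B - A‖ * ‖c‖ * ‖d‖ * Real.sin θ) := by
    rw [tetVol, cross3_eq_of_sub_mem_span _ (K.sub_sub_starProjection_mem (C - A)),
      inner_cross3_eq_of_sub_mem_span _ _ (K.sub_sub_starProjection_mem (D - A)),
      abs_inner_cross3_of_inner_eq_zero (inner_sub_starProjection_span_singleton _ _)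
        (inner_sub_starProjection_span_singleton _ _), hθ]
  rw [area_C, area_D, volume, dist_comm, dist_eq_norm]
  field_simp
  ring
end

section
/- Let A, B, C be affinely independent points in a Euclidean plane (or Euclidean space), let S ≥ 1 be such that the ratio of the longest side length of triangle ABC to its shortest side length is at most S, and let β ∈ (0, π) be the largest of the three interior angles of the triangle. Then every interior angle α of triangle ABC satisfies α > (π − β)/(3S). -/
/-!
By the law of sines there is `k > 0` with `sin θ = k · (opposite side)` for every angle `θ`, so
the side-ratio bound gives `sin β ≤ S · sin α` for any two angles. As `β ≥ π / 3` by the angle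
sum, `π - β ∈ (0, 2π/3]`, where `sin t > t / 3`; hence `(π - β) / 3 < sin β ≤ S sin α < S α`.
-/

open EuclideanGeometry Real

theorem div_three_lt_sin {x : ℝ} (hx : 0 < x) (hx' : x ≤ 2 * π / 3) : x / 3 < sin x := by
  rcases le_or_gt x (π / 2) with hle | hgt
  · calc x / 3 < 2 / π * x := by
          rw [div_mul_eq_mul_div, div_lt_div_iff₀ three_pos pi_pos]
          nlinarith [pi_lt_four]
      _ ≤ sin x := mul_le_sin hx.le hle
  · have hsin : sin (π / 3) ≤ sin x := by
      rw [← sin_pi_sub x]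
      exact sin_le_sin_of_le_of_le_pi_div_two (by linarith) (by linarith) (by linarith)
    have hsqrt : (1.7 : ℝ) < √3 := by rw [lt_sqrt (by norm_num)]; norm_num
    rw [sin_pi_div_three] at hsin
    linarith [pi_lt_d2]

theorem div_mul_lt_of_sin_le_mul_sin {α β S : ℝ} (hα : 0 < α) (hβ : π / 3 ≤ β) (hβπ : β < π)
    (hS : 0 < S) (h : sin β ≤ S * sin α) : (π - β) / (3 * S) < α := by
  have hβsin : (π - β) / 3 < sin β := by
    simpa only [sin_pi_sub] using div_three_lt_sin (x := π - β) (by linarith) (by linarith)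
  rw [div_lt_iff₀ (by positivity)]
  calc π - β < 3 * (S * sin α) := by linarith
    _ ≤ α * (3 * S) := by nlinarith [sin_le hα.le]

section Triangle

variable {V P : Type*} [NormedAddCommGroup V] [InnerProductSpace ℝ V] [MetricSpace P]
  [NormedAddTorsor V P]

theorem exists_pos_sin_angle_eq_mul_dist {A B C : P} (h : ¬Collinear ℝ ({A, B, C} : Set P)) :
    ∃ k > 0, sin (∠ B A C) = k * dist B C ∧ sin (∠ A B C) = k * dist C A ∧
      sin (∠ B C A) = k * dist A B := by
  have hAB := ne₁₂_of_not_collinear h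
  have hBC := ne₂₃_of_not_collinear h
  have hCA := (ne₁₃_of_not_collinear h).symm
  refine ⟨sin (∠ B A C) / dist B C,
    div_pos (sin_pos_of_not_collinear (by rwa [Set.insert_comm])) (dist_pos.2 hBC),
    (div_mul_cancel₀ _ (dist_ne_zero.2 hBC)).symm, ?_, ?_⟩
  · rw [angle_comm B A C, ← sin_angle_div_dist_eq_sin_angle_div_dist hBC hCA,
      div_mul_cancel₀ _ (dist_ne_zero.2 hCA)]
  · rw [angle_comm B A C, sin_angle_div_dist_eq_sin_angle_div_dist hAB hBC,
      div_mul_cancel₀ _ (dist_ne_zero.2 hAB)]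

theorem sin_angle_le_mul_sin_angle {A B C : P} (h : ¬Collinear ℝ ({A, B, C} : Set P))
    {S : ℝ} (hS : 0 ≤ S)
    (hratio : max (dist A B) (max (dist B C) (dist C A)) ≤
      S * min (dist A B) (min (dist B C) (dist C A)))
    {θ φ : ℝ} (hθ : θ ∈ ({∠ B A C, ∠ A B C, ∠ B C A} : Set ℝ))
    (hφ : φ ∈ ({∠ B A C, ∠ A B C, ∠ B C A} : Set ℝ)) :
    sin θ ≤ S * sin φ := by
  obtain ⟨k, hk, hsinA, hsinB, hsinC⟩ := exists_pos_sin_angle_eq_mul_dist h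
  have hθle : sin θ ≤ k * max (dist A B) (max (dist B C) (dist C A)) := by
    rcases hθ with rfl | rfl | rfl
    all_goals simp only [hsinA, hsinB, hsinC]; gcongr; simp
  have hφge : k * min (dist A B) (min (dist B C) (dist C A)) ≤ sin φ := by
    rcases hφ with rfl | rfl | rfl
    all_goals simp only [hsinA, hsinB, hsinC]; gcongr; simp
  calc sin θ ≤ k * (S * min (dist A B) (min (dist B C) (dist C A))) := by
        grw [hθle, hratio]
    _ ≤ S * sin φ := by rw [mul_left_comm]; gcongr

end Triangle

theorem stmt3 (A B C : EuclideanSpace ℝ (Fin 2))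
    (hindep : AffineIndependent ℝ ![A, B, C])
    (S : ℝ) (hS : 1 ≤ S)
    (hratio : max (dist A B) (max (dist B C) (dist C A)) ≤
      S * min (dist A B) (min (dist B C) (dist C A)))
    (β : ℝ) (hβ : β = max (∠ B A C) (max (∠ A B C) (∠ B C A)))
    (hβmem : β ∈ Set.Ioo 0 Real.pi) :
    (Real.pi - β) / (3 * S) < ∠ B A C ∧
    (Real.pi - β) / (3 * S) < ∠ A B C ∧
    (Real.pi - β) / (3 * S) < ∠ B C A := by
  have hncol : ¬Collinear ℝ ({A, B, C} : Set (EuclideanSpace ℝ (Fin 2))) :=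
    (affineIndependent_iff_not_collinear_set).1 hindep
  have hβ_mem : β ∈ ({∠ B A C, ∠ A B C, ∠ B C A} : Set ℝ) := by
    rcases max_choice (∠ B A C) (max (∠ A B C) (∠ B C A)) with h | h
    · exact .inl (hβ.trans h)
    · exact .inr ((max_choice _ _).imp (hβ.trans h).trans (hβ.trans h).trans)
  have hβ_ge : π / 3 ≤ β := by
    have hsum := angle_add_angle_add_angle_eq_pi C (ne₁₂_of_not_collinear hncol).symm
    have hmax : ∠ B A C ≤ β ∧ ∠ A B C ≤ β ∧ ∠ B C A ≤ β := by simp [hβ]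
    rw [angle_comm C A B] at hsum
    linarith
  have hlt : ∀ α ∈ ({∠ B A C, ∠ A B C, ∠ B C A} : Set ℝ), 0 < α → (π - β) / (3 * S) < α :=
    fun α hα hα_pos ↦ div_mul_lt_of_sin_le_mul_sin hα_pos hβ_ge hβmem.2 (by linarith)
      (sin_angle_le_mul_sin_angle hncol (by linarith) hratio hβ_mem hα)
  refine ⟨hlt _ (by simp) (angle_pos_of_not_collinear ?_), hlt _ (by simp)
    (angle_pos_of_not_collinear hncol), hlt _ (by simp) (angle_pos_of_not_collinear ?_)⟩
  · rwa [Set.insert_comm]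
  · rwa [Set.pair_comm, Set.insert_comm]
end

section
/- Let P₀, P₁, …, P_k be points of the Euclidean plane ℝ² with P₀ ≠ 0 and P_k ≠ 0, let L ≥ 0 satisfy Σ_{j=0}^{k−1} dist(P_j, P_{j+1}) ≤ L, and suppose that for some ε with 0 < ε ≤ π the angle at the origin between P₀ and P_k is at least ε. Then every vertex of the chain satisfies ‖P_j‖ ≤ L·(1 + 1/sin ε) for all 0 ≤ j ≤ k. -/
/-!
If the angle between `u` and `v` is at least `ε`, the law of cosines gives
`‖u - v‖ ≥ (‖u‖ + ‖v‖) sin (ε / 2)`, so the endpoints of a chain of length `≤ L` subtending an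
angle `≥ ε` at the origin satisfy `‖P₀‖ + ‖Pₖ‖ ≤ L / sin (ε / 2)`. Every vertex lies within the
remaining length of the chain from one of its endpoints, whence `2 ‖Pⱼ‖ ≤ ‖P₀‖ + ‖Pₖ‖ + L`.
-/

open InnerProductGeometry Real

theorem two_mul_dist_le_add_sum_dist {α : Type*} [PseudoMetricSpace α] (P : ℕ → α) (x : α)
    {j k : ℕ} (hj : j ≤ k) :
    2 * dist (P j) x ≤
      dist (P 0) x + dist (P k) x + ∑ i ∈ Finset.range k, dist (P i) (P (i + 1)) := by
  have h0 : dist (P j) x ≤ dist (P 0) x + ∑ i ∈ Finset.range j, dist (P i) (P (i + 1)) :=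
    (dist_triangle_left _ _ (P 0)).trans (by linarith [dist_le_range_sum_dist P j])
  have hk : dist (P j) x ≤ dist (P k) x + ∑ i ∈ Finset.Ico j k, dist (P i) (P (i + 1)) :=
    (dist_triangle _ (P k) _).trans (by linarith [dist_le_Ico_sum_dist P hj])
  linarith [Finset.sum_range_add_sum_Ico (fun i ↦ dist (P i) (P (i + 1))) hj]

theorem add_norm_mul_sin_half_le_norm_sub {V : Type*} [NormedAddCommGroup V]
    [InnerProductSpace ℝ V] {u v : V} {ε : ℝ} (hε : 0 ≤ ε) (hangle : ε ≤ angle u v) :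
    (‖u‖ + ‖v‖) * sin (ε / 2) ≤ ‖u - v‖ := by
  have hcos : cos (angle u v) ≤ 1 - 2 * sin (ε / 2) ^ 2 := by
    rw [sin_sq_eq_half_sub, show 2 * (ε / 2) = ε by ring]
    linarith [cos_le_cos_of_nonneg_of_le_pi hε (angle_le_pi u v) hangle]
  have hlaw := norm_sub_sq_eq_norm_sq_add_norm_sq_sub_two_mul_norm_mul_norm_mul_cos_angle u v
  have hab : 0 ≤ ‖u‖ * ‖v‖ := by positivity
  -- `(a + b)² s² = (a - b)² s² + 4ab s² ≤ (a - b)² + 4ab s² ≤ ‖u - v‖²` with `s = sin (ε / 2)`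
  refine abs_le_of_sq_le_sq' ?_ (norm_nonneg _) |>.2
  nlinarith [mul_le_mul_of_nonneg_left hcos hab, sin_sq_le_one (ε / 2),
    mul_nonneg (sq_nonneg (‖u‖ - ‖v‖)) (sub_nonneg.2 (sin_sq_le_one (ε / 2)))]

theorem one_add_inv_sin_half_le {ε : ℝ} (hε : 0 < ε) (hεπ : ε ≤ π) :
    1 + (sin (ε / 2))⁻¹ ≤ 2 * (1 + 1 / sin ε) := by
  rcases hεπ.eq_or_lt with rfl | hlt
  · -- `sin π = 0`, so `1 / sin π = 0`
    norm_num
  have hs : 0 < sin (ε / 2) := sin_pos_of_pos_of_lt_pi (by linarith) (by linarith)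
  have hc : 0 < cos (ε / 2) := cos_pos_of_mem_Ioo ⟨by linarith, by linarith⟩
  have hsin : sin ε = 2 * sin (ε / 2) * cos (ε / 2) := by
    rw [← sin_two_mul]; ring_nf
  rw [hsin]
  field_simp
  nlinarith [cos_le_one (ε / 2)]

theorem stmt5_general (k : ℕ) (P : ℕ → EuclideanSpace ℝ (Fin 2))
    (L : ℝ) (hL : 0 ≤ L)
    (hlen : ∑ j ∈ Finset.range k, dist (P j) (P (j + 1)) ≤ L)
    (ε : ℝ) (hε : 0 < ε) (hεπ : ε ≤ Real.pi)
    (hangle : ε ≤ InnerProductGeometry.angle (P 0) (P k)) :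
    ∀ j ≤ k, ‖P j‖ ≤ L * (1 + 1 / Real.sin ε) := by
  intro j hj
  have hs : 0 < sin (ε / 2) := sin_pos_of_pos_of_lt_pi (by linarith) (by linarith)
  have hends : ‖P 0‖ + ‖P k‖ ≤ L * (sin (ε / 2))⁻¹ := by
    rw [← div_eq_mul_inv, le_div_iff₀ hs]
    calc (‖P 0‖ + ‖P k‖) * sin (ε / 2) ≤ ‖P 0 - P k‖ :=
          add_norm_mul_sin_half_le_norm_sub hε.le hangle
      _ = dist (P 0) (P k) := (dist_eq_norm _ _).symm
      _ ≤ L := (dist_le_range_sum_dist P k).trans hlen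
  have hvertex := two_mul_dist_le_add_sum_dist P 0 hj
  simp only [dist_zero_right] at hvertex
  linarith [mul_le_mul_of_nonneg_left (one_add_inv_sin_half_le hε hεπ) hL]

theorem stmt5 (k : ℕ) (P : ℕ → EuclideanSpace ℝ (Fin 2))
    (h0 : P 0 ≠ 0) (hk : P k ≠ 0)
    (L : ℝ) (hL : 0 ≤ L)
    (hlen : ∑ j ∈ Finset.range k, dist (P j) (P (j + 1)) ≤ L)
    (ε : ℝ) (hε : 0 < ε) (hεπ : ε ≤ Real.pi)
    (hangle : ε ≤ InnerProductGeometry.angle (P 0) (P k)) :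
    ∀ j ≤ k, ‖P j‖ ≤ L * (1 + 1 / Real.sin ε) :=
  stmt5_general k P L hL hlen ε hε hεπ hangle
end

section
/- Let w, x, y, z ∈ ℝ² be four points such that every three of them are affinely independent and the open segments (w, y) and (x, z) have a common point (so that wxyz is a convex quadrilateral with diagonals wy and xz). Let weights w_w, w_x, w_y, w_z ∈ ℝ be given, and let f_{xyz}, f_{wxz}, f_{xyw}, f_{wyz} : ℝ² → ℝ be paraboloid lifts interpolating the weights at the indicated triples of points. Suppose the triangulation {xyz, wxz} of the quadrilateral is not locally convex at the diagonal xz, i.e., f_{xyz}(w) < w_w. Then for every point p in the interior of the convex hull of {w, x, y, z}, whenever p lies in an old triangle T₁ ∈ {conv{x,y,z}, conv{w,x,z}} and in a new triangle T₂ ∈ {conv{x,y,w}, conv{w,y,z}}, the corresponding lifts satisfy f_{T₂}(p) > f_{T₁}(p). In other words, replacing the triangles xyz and wxz by xyw and wyz strictly increases the height function at every interior point of the quadrilateral. -/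
/-!
The difference of two paraboloid lifts is affine. For an old triangle `T₁` and a new triangle
`T₂`, the affine function `f_{T₂} - f_{T₁}` vanishes at the two vertices they share and is
positive at a third vertex, either directly by non-convexity or because it agrees there with
another such difference. Evaluating it at the crossing point of the diagonals, where both
diagonals give it as a positive combination of their endpoint values, makes it positive at the
fourth vertex as well. A nonconstant affine function that is nonnegative on the quadrilateral is
positive on its interior.
-/

/-- A function `f : ℝ² → ℝ` is a paraboloid lift if it is the sum of the squared norm
and an affine map. -/
def IsParaboloidLift (f : EuclideanSpace ℝ (Fin 2) → ℝ) : Prop :=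
  ∃ g : EuclideanSpace ℝ (Fin 2) →ᵃ[ℝ] ℝ, ∀ p, f p = ‖p‖ ^ 2 + g p

open Filter Topology

namespace AffineMap

variable {E : Type*} [AddCommGroup E] [Module ℝ E]

theorem pos_iff_of_mem_openSegment (d : E →ᵃ[ℝ] ℝ) {a b q : E}
    (hq : q ∈ openSegment ℝ a b) (hb : d b = 0) : 0 < d q ↔ 0 < d a := by
  obtain ⟨s, s', hs, -, hss, rfl⟩ := hq
  rw [Convex.combo_affine_apply hss, hb, smul_zero, add_zero, smul_eq_mul]
  exact mul_pos_iff_of_pos_left hs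

theorem pos_of_mem_openSegment_of_mem_openSegment (d : E →ᵃ[ℝ] ℝ) {a a' b b' q : E}
    (hqa : q ∈ openSegment ℝ a a') (hqb : q ∈ openSegment ℝ b b') (ha' : d a' = 0)
    (hb' : d b' = 0) (ha : 0 < d a) : 0 < d b :=
  (d.pos_iff_of_mem_openSegment hqb hb').1 ((d.pos_iff_of_mem_openSegment hqa ha').2 ha)

variable [TopologicalSpace E] [ContinuousAdd E] [ContinuousSMul ℝ E]

theorem pos_of_mem_interior_convexHull (d : E →ᵃ[ℝ] ℝ) {s : Set E}
    (hs : ∀ v ∈ s, 0 ≤ d v) {a b : E} (hab : d a < d b) {p : E}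
    (hp : p ∈ interior (convexHull ℝ s)) : 0 < d p := by
  have hhull : convexHull ℝ s ⊆ {v | 0 ≤ d v} :=
    convexHull_min hs ((convex_Ici 0).affine_preimage d)
  have hline : Tendsto (fun t : ℝ => t • (a - b) + p) (𝓝[>] 0) (𝓝 p) := by
    have := ((continuous_id.smul continuous_const).add continuous_const).tendsto (0 : ℝ)
      (f := fun t : ℝ => t • (a - b) + p)
    simpa using this.mono_left nhdsWithin_le_nhds
  obtain ⟨t, htp, ht⟩ :=
    ((hline.eventually (mem_interior_iff_mem_nhds.1 hp)).and self_mem_nhdsWithin).exists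
  have hdt : d (t • (a - b) + p) = t * (d a - d b) + d p := by
    rw [← vadd_eq_add, d.map_vadd, map_smul, ← vsub_eq_sub, d.linearMap_vsub]; rfl
  have hnonneg : 0 ≤ d (t • (a - b) + p) := hhull htp
  nlinarith [mul_pos (Set.mem_Ioi.1 ht) (sub_pos.2 hab)]

end AffineMap

theorem IsParaboloidLift.exists_affineMap_eq_sub {f g : EuclideanSpace ℝ (Fin 2) → ℝ}
    (hf : IsParaboloidLift f) (hg : IsParaboloidLift g) :
    ∃ d : EuclideanSpace ℝ (Fin 2) →ᵃ[ℝ] ℝ, ⇑d = f - g := by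
  obtain ⟨a, ha⟩ := hf
  obtain ⟨b, hb⟩ := hg
  exact ⟨a - b, funext fun p => by simp [ha, hb]⟩

theorem stmt9_general (w x y z : EuclideanSpace ℝ (Fin 2))
    (hdiag : ∃ p : EuclideanSpace ℝ (Fin 2),
      p ∈ openSegment ℝ w y ∧ p ∈ openSegment ℝ x z)
    (ww wx wy wz : ℝ)
    (fxyz fwxz fxyw fwyz : EuclideanSpace ℝ (Fin 2) → ℝ)
    (hfxyz : IsParaboloidLift fxyz)
    (hfwxz : IsParaboloidLift fwxz)
    (hfxyw : IsParaboloidLift fxyw)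
    (hfwyz : IsParaboloidLift fwyz)
    (hxyz₁ : fxyz x = wx) (hxyz₂ : fxyz y = wy) (hxyz₃ : fxyz z = wz)
    (hwxz₁ : fwxz w = ww) (hwxz₂ : fwxz x = wx) (hwxz₃ : fwxz z = wz)
    (hxyw₁ : fxyw x = wx) (hxyw₂ : fxyw y = wy) (hxyw₃ : fxyw w = ww)
    (hwyz₁ : fwyz w = ww) (hwyz₂ : fwyz y = wy) (hwyz₃ : fwyz z = wz)
    (hnotconvex : fxyz w < ww) :
    ∀ p ∈ interior (convexHull ℝ ({w, x, y, z} : Set (EuclideanSpace ℝ (Fin 2)))),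
      (p ∈ convexHull ℝ ({x, y, z} : Set (EuclideanSpace ℝ (Fin 2))) →
        p ∈ convexHull ℝ ({x, y, w} : Set (EuclideanSpace ℝ (Fin 2))) →
        fxyw p > fxyz p) ∧
      (p ∈ convexHull ℝ ({x, y, z} : Set (EuclideanSpace ℝ (Fin 2))) →
        p ∈ convexHull ℝ ({w, y, z} : Set (EuclideanSpace ℝ (Fin 2))) →
        fwyz p > fxyz p) ∧
      (p ∈ convexHull ℝ ({w, x, z} : Set (EuclideanSpace ℝ (Fin 2))) →
        p ∈ convexHull ℝ ({x, y, w} : Set (EuclideanSpace ℝ (Fin 2))) →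
        fxyw p > fwxz p) ∧
      (p ∈ convexHull ℝ ({w, x, z} : Set (EuclideanSpace ℝ (Fin 2))) →
        p ∈ convexHull ℝ ({w, y, z} : Set (EuclideanSpace ℝ (Fin 2))) →
        fwyz p > fwxz p) := by
  obtain ⟨q, hqwy, hqxz⟩ := hdiag
  have hqyw : q ∈ openSegment ℝ y w := openSegment_symm ℝ w y ▸ hqwy
  have hqzx : q ∈ openSegment ℝ z x := openSegment_symm ℝ x z ▸ hqxz
  obtain ⟨d₁, hd₁⟩ := hfxyw.exists_affineMap_eq_sub hfxyz
  obtain ⟨d₂, hd₂⟩ := hfwyz.exists_affineMap_eq_sub hfxyz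
  obtain ⟨d₃, hd₃⟩ := hfxyw.exists_affineMap_eq_sub hfwxz
  obtain ⟨d₄, hd₄⟩ := hfwyz.exists_affineMap_eq_sub hfwxz
  simp only [funext_iff, Pi.sub_apply] at hd₁ hd₂ hd₃ hd₄
  obtain ⟨h₁x, h₁y, h₁w⟩ : d₁ x = 0 ∧ d₁ y = 0 ∧ 0 < d₁ w := by
    simp [hd₁, hxyw₁, hxyz₁, hxyw₂, hxyz₂, hxyw₃, hnotconvex]
  have h₁z : 0 < d₁ z := d₁.pos_of_mem_openSegment_of_mem_openSegment hqwy hqzx h₁y h₁x h₁w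
  obtain ⟨h₂y, h₂z, h₂w⟩ : d₂ y = 0 ∧ d₂ z = 0 ∧ 0 < d₂ w := by
    simp [hd₂, hwyz₂, hxyz₂, hwyz₃, hxyz₃, hwyz₁, hnotconvex]
  have h₂x : 0 < d₂ x := d₂.pos_of_mem_openSegment_of_mem_openSegment hqwy hqxz h₂y h₂z h₂w
  obtain ⟨h₃x, h₃w, h₃z⟩ : d₃ x = 0 ∧ d₃ w = 0 ∧ 0 < d₃ z := by
    simpa [hd₃, hxyw₁, hwxz₂, hxyw₃, hwxz₁, hd₁, hwxz₃, hxyz₃] using h₁z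
  have h₃y : 0 < d₃ y := d₃.pos_of_mem_openSegment_of_mem_openSegment hqzx hqyw h₃x h₃w h₃z
  obtain ⟨h₄w, h₄z, h₄x⟩ : d₄ w = 0 ∧ d₄ z = 0 ∧ 0 < d₄ x := by
    simpa [hd₄, hwyz₁, hwxz₁, hwyz₃, hwxz₃, hd₂, hwxz₂, hxyz₁] using h₂x
  have h₄y : 0 < d₄ y := d₄.pos_of_mem_openSegment_of_mem_openSegment hqxz hqyw h₄z h₄w h₄x
  intro p hp
  have quad_pos (d : EuclideanSpace ℝ (Fin 2) →ᵃ[ℝ] ℝ) {a b} (hab : d a < d b)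
      (hw : 0 ≤ d w) (hx : 0 ≤ d x) (hy : 0 ≤ d y) (hz : 0 ≤ d z) : 0 < d p :=
    d.pos_of_mem_interior_convexHull (by simp [hw, hx, hy, hz]) hab hp
  refine ⟨fun _ _ => ?_, fun _ _ => ?_, fun _ _ => ?_, fun _ _ => ?_⟩
  · simpa [hd₁] using quad_pos d₁ (h₁x.trans_lt h₁w) h₁w.le h₁x.ge h₁y.ge h₁z.le
  · simpa [hd₂] using quad_pos d₂ (h₂y.trans_lt h₂w) h₂w.le h₂x.le h₂y.ge h₂z.ge
  · simpa [hd₃] using quad_pos d₃ (h₃x.trans_lt h₃y) h₃w.ge h₃x.ge h₃y.le h₃z.le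
  · simpa [hd₄] using quad_pos d₄ (h₄w.trans_lt h₄y) h₄w.ge h₄x.le h₄y.le h₄z.ge

theorem stmt9 (w x y z : EuclideanSpace ℝ (Fin 2))
    (hwxy : AffineIndependent ℝ ![w, x, y])
    (hwxz : AffineIndependent ℝ ![w, x, z])
    (hwyz : AffineIndependent ℝ ![w, y, z])
    (hxyz : AffineIndependent ℝ ![x, y, z])
    (hdiag : ∃ p : EuclideanSpace ℝ (Fin 2),
      p ∈ openSegment ℝ w y ∧ p ∈ openSegment ℝ x z)
    (ww wx wy wz : ℝ)
    (fxyz fwxz fxyw fwyz : EuclideanSpace ℝ (Fin 2) → ℝ)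
    (hfxyz : IsParaboloidLift fxyz)
    (hfwxz : IsParaboloidLift fwxz)
    (hfxyw : IsParaboloidLift fxyw)
    (hfwyz : IsParaboloidLift fwyz)
    (hxyz₁ : fxyz x = wx) (hxyz₂ : fxyz y = wy) (hxyz₃ : fxyz z = wz)
    (hwxz₁ : fwxz w = ww) (hwxz₂ : fwxz x = wx) (hwxz₃ : fwxz z = wz)
    (hxyw₁ : fxyw x = wx) (hxyw₂ : fxyw y = wy) (hxyw₃ : fxyw w = ww)
    (hwyz₁ : fwyz w = ww) (hwyz₂ : fwyz y = wy) (hwyz₃ : fwyz z = wz)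
    (hnotconvex : fxyz w < ww) :
    ∀ p ∈ interior (convexHull ℝ ({w, x, y, z} : Set (EuclideanSpace ℝ (Fin 2)))),
      (p ∈ convexHull ℝ ({x, y, z} : Set (EuclideanSpace ℝ (Fin 2))) →
        p ∈ convexHull ℝ ({x, y, w} : Set (EuclideanSpace ℝ (Fin 2))) →
        fxyw p > fxyz p) ∧
      (p ∈ convexHull ℝ ({x, y, z} : Set (EuclideanSpace ℝ (Fin 2))) →
        p ∈ convexHull ℝ ({w, y, z} : Set (EuclideanSpace ℝ (Fin 2))) →
        fwyz p > fxyz p) ∧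
      (p ∈ convexHull ℝ ({w, x, z} : Set (EuclideanSpace ℝ (Fin 2))) →
        p ∈ convexHull ℝ ({x, y, w} : Set (EuclideanSpace ℝ (Fin 2))) →
        fxyw p > fwxz p) ∧
      (p ∈ convexHull ℝ ({w, x, z} : Set (EuclideanSpace ℝ (Fin 2))) →
        p ∈ convexHull ℝ ({w, y, z} : Set (EuclideanSpace ℝ (Fin 2))) →
        fwyz p > fwxz p) :=
  stmt9_general w x y z hdiag ww wx wy wz fxyz fwxz fxyw fwyz hfxyz hfwxz hfxyw hfwyz hxyz₁ hxyz₂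
    hxyz₃ hwxz₁ hwxz₂ hwxz₃ hxyw₁ hxyw₂ hxyw₃ hwyz₁ hwyz₂ hwyz₃ hnotconvex
end
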